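/- arXiv:1304.3074 — 8 statements merged into one kernel-verified Lean document; each statement's English description precedes it below -/
import Mathlib

section
/- The set of probability measures on a closed interval [α,β] ⊆ ℝ with prescribed mean μ and second moment μ² + σ² is nonempty if and only if μ ∈ [α,β] and σ² ≤ (β−μ)(μ−α). -/
open MeasureTheory Set

lemma integrable_dirac' {f : ℝ → ℝ} (hf : Measurable f) (a : ℝ) :
    Integrable f (Measure.dirac a) := by
  refine ⟨hf.aestronglyMeasurable, ?_⟩
  rw [HasFiniteIntegral, lintegral_dirac' _ (by fun_prop)]
  exact ENNReal.coe_lt_top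

lemma integrable_twoPoint {f : ℝ → ℝ} (hf : Measurable f) (a b : ℝ) (p q : ℝ) :
    Integrable f (ENNReal.ofReal p • Measure.dirac a + ENNReal.ofReal q • Measure.dirac b) := by
  refine Integrable.add_measure ?_ ?_ <;>
  exact (integrable_dirac' hf _).smul_measure ENNReal.ofReal_ne_top

lemma integral_twoPoint {f : ℝ → ℝ} (hf : Measurable f) (a b : ℝ) (p q : ℝ)
    (hp : 0 ≤ p) (hq : 0 ≤ q) :
    ∫ t, f t ∂(ENNReal.ofReal p • Measure.dirac a + ENNReal.ofReal q • Measure.dirac b)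
      = p * f a + q * f b := by
  rw [integral_add_measure ((integrable_dirac' hf _).smul_measure ENNReal.ofReal_ne_top)
      ((integrable_dirac' hf _).smul_measure ENNReal.ofReal_ne_top),
    integral_smul_measure, integral_smul_measure, integral_dirac, integral_dirac,
    ENNReal.toReal_ofReal hp, ENNReal.toReal_ofReal hq]
  simp [smul_eq_mul]

/-- The set of probability measures on [α,β] with mean μ and second moment μ²+σ²
is nonempty iff μ ∈ [α,β] and σ² ≤ (β−μ)(μ−α). -/
theorem moment_set_nonempty_iff (α β μ σ : ℝ) (hab : α ≤ β) (hσ : 0 ≤ σ) :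
    (∃ Q : Measure ℝ, IsProbabilityMeasure Q ∧ Q (Set.Icc α β)ᶜ = 0 ∧
      Integrable id Q ∧ Integrable (fun t => t ^ 2) Q ∧
      (∫ t, t ∂Q) = μ ∧ (∫ t, t ^ 2 ∂Q) = μ ^ 2 + σ ^ 2) ↔
    (μ ∈ Set.Icc α β ∧ σ ^ 2 ≤ (β - μ) * (μ - α)) := by
  constructor
  · rintro ⟨Q, hQ, hsupp, hint1, hint2, hm1, hm2⟩
    have hae : ∀ᵐ t ∂Q, t ∈ Set.Icc α β := by
      have : {t : ℝ | ¬ t ∈ Set.Icc α β} = (Set.Icc α β)ᶜ := rfl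
      rw [ae_iff, this]; exact hsupp
    have hμmem : μ ∈ Set.Icc α β := by
      constructor
      · calc α = ∫ _t, α ∂Q := by simp
          _ ≤ ∫ t, t ∂Q := integral_mono_ae (integrable_const α) hint1
              (hae.mono fun t ht => ht.1)
          _ = μ := hm1
      · calc μ = ∫ t, t ∂Q := hm1.symm
          _ ≤ ∫ _t, β ∂Q := integral_mono_ae hint1 (integrable_const β)
              (hae.mono fun t ht => ht.2)
          _ = β := by simp
    refine ⟨hμmem, ?_⟩
    have h0 : 0 ≤ ∫ t, (β - t) * (t - α) ∂Q :=
      integral_nonneg_of_ae (hae.mono fun t ht =>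
        mul_nonneg (by linarith [ht.2]) (by linarith [ht.1]))
    have heq : ∫ t, (β - t) * (t - α) ∂Q
        = (α + β) * μ - (μ ^ 2 + σ ^ 2) - α * β := by
      have hrw : ∀ t : ℝ, (β - t) * (t - α) = (α + β) * t - t ^ 2 - α * β := by
        intro t; ring
      simp_rw [hrw]
      have hi1 : Integrable (fun t : ℝ => (α + β) * t) Q := by
        simpa [id] using hint1.const_mul (α + β)
      have hi12 : Integrable (fun t : ℝ => (α + β) * t - t ^ 2) Q := hi1.sub hint2
      rw [integral_sub hi12 (integrable_const _), integral_sub hi1 hint2,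
        integral_const_mul, hm1, hm2]
      simp
    rw [heq] at h0
    nlinarith
  · rintro ⟨⟨hαμ, hμβ⟩, hvar⟩
    by_cases hσ0 : σ = 0
    · refine ⟨Measure.dirac μ, inferInstance, ?_, integrable_dirac' measurable_id μ,
        integrable_dirac' (by fun_prop) μ, ?_, ?_⟩
      · rw [Measure.dirac_apply' _ (measurableSet_Icc.compl)]
        simp [hαμ, hμβ]
      · simpa using integral_dirac id μ
      · rw [integral_dirac]
        simp [hσ0]
    · -- σ > 0, so β - μ > 0 and μ - α > 0
      have hσpos : 0 < σ := lt_of_le_of_ne hσ (Ne.symm hσ0)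
      have hσ2 : 0 < σ ^ 2 := by positivity
      have hβμ : 0 < β - μ := by nlinarith
      have hμα : 0 < μ - α := by nlinarith
      set d : ℝ := σ ^ 2 / (β - μ) with hd
      have hdpos : 0 < d := div_pos hσ2 hβμ
      have hdle : d ≤ μ - α := by
        rw [hd, div_le_iff₀ hβμ]; nlinarith
      set a : ℝ := μ - d with ha
      have haα : α ≤ a := by simp [ha]; linarith
      set p : ℝ := (β - μ) / (β - a) with hp
      have hba : 0 < β - a := by simp [ha]; linarith
      have hp0 : 0 ≤ p := le_of_lt (div_pos hβμ hba)
      have hp1 : p ≤ 1 := by rw [hp, div_le_one hba]; simp [ha]; linarith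
      set q : ℝ := 1 - p with hq
      have hq0 : 0 ≤ q := by linarith
      clear_value d a p q
      refine ⟨ENNReal.ofReal p • Measure.dirac a + ENNReal.ofReal q • Measure.dirac β,
        ?_, ?_, integrable_twoPoint measurable_id a β p q,
        integrable_twoPoint (by fun_prop) a β p q, ?_, ?_⟩
      · constructor
        simp only [Measure.add_apply, Measure.smul_apply, smul_eq_mul]
        rw [Measure.dirac_apply_of_mem (mem_univ a), Measure.dirac_apply_of_mem (mem_univ β),
          mul_one, mul_one, ← ENNReal.ofReal_add hp0 hq0]
        have : p + q = 1 := by rw [hq]; ring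
        rw [this, ENNReal.ofReal_one]
      · simp only [Measure.add_apply, Measure.smul_apply, smul_eq_mul]
        rw [Measure.dirac_apply' _ measurableSet_Icc.compl,
          Measure.dirac_apply' _ measurableSet_Icc.compl]
        have haI : a ∈ Set.Icc α β := ⟨haα, by simp [ha]; linarith⟩
        have hbI : β ∈ Set.Icc α β := ⟨hab, le_refl β⟩
        rw [Set.indicator_of_notMem (by simpa using haI),
          Set.indicator_of_notMem (by simpa using hbI)]
        simp
      · have hne : β - μ ≠ 0 := ne_of_gt hβμ
        have hbane : β - a ≠ 0 := ne_of_gt hba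
        have hpval : p * (β - a) = β - μ := by rw [hp]; field_simp
        have hI := integral_twoPoint measurable_id a β p q hp0 hq0
        simp only [id_eq] at hI
        rw [hI, hq]
        linear_combination -hpval
      · have hne : β - μ ≠ 0 := ne_of_gt hβμ
        have hbane : β - a ≠ 0 := ne_of_gt hba
        have hpval : p * (β - a) = β - μ := by rw [hp]; field_simp
        have hda : d * (β - μ) = σ ^ 2 := by rw [hd]; field_simp
        rw [integral_twoPoint (by fun_prop) a β p q hp0 hq0, hq]
        linear_combination -(β + a) * hpval + hda + (μ - β) * ha
end

section
/- If −∞ < α < β < +∞, μ ∈ [α,β], and σ² = (β−μ)(μ−α), then the set M of probability measures on [α,β] with mean μ and second moment μ²+σ² consists of exactly one measure: the two-point measure assigning mass (β−μ)/(β−α) to α and mass (μ−α)/(β−α) to β. -/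
/-!
The polynomial `(β - t) (t - α)` is nonnegative on `[α, β]`, and its integral against any
`Q ∈ M` is `(α + β) μ - (μ² + σ²) - α β = (β - μ)(μ - α) - σ² = 0`. Hence `Q` is concentrated
on its zeros `{α, β}`, i.e. `Q` is a two-point measure, and the weights of a two-point
probability measure are pinned down by its mean.
-/

open MeasureTheory Set
open scoped ENNReal

section TwoPoint

variable {X E : Type*} [MeasurableSpace X]

lemma isProbabilityMeasure_ofReal_smul_dirac_add {p q : ℝ} (a b : X) (hp : 0 ≤ p) (hq : 0 ≤ q)
    (hpq : p + q = 1) :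
    IsProbabilityMeasure (ENNReal.ofReal p • Measure.dirac a + ENNReal.ofReal q • Measure.dirac b) :=
  ⟨by simp [← ENNReal.ofReal_add hp hq, hpq]⟩

variable [MeasurableSingletonClass X] [NormedAddCommGroup E]

lemma integrable_smul_dirac_add_smul_dirac (f : X → E) (a b : X) {c d : ℝ≥0∞}
    (hc : c ≠ ∞) (hd : d ≠ ∞) : Integrable f (c • Measure.dirac a + d • Measure.dirac b) :=
  ((integrable_dirac enorm_lt_top).smul_measure hc).add_measure
    ((integrable_dirac enorm_lt_top).smul_measure hd)

lemma integral_smul_dirac_add_smul_dirac [NormedSpace ℝ E] [CompleteSpace E] (f : X → E)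
    (a b : X) {c d : ℝ≥0∞} (hc : c ≠ ∞) (hd : d ≠ ∞) :
    ∫ x, f x ∂(c • Measure.dirac a + d • Measure.dirac b) = c.toReal • f a + d.toReal • f b := by
  rw [integral_add_measure ((integrable_dirac enorm_lt_top).smul_measure hc)
      ((integrable_dirac enorm_lt_top).smul_measure hd),
    integral_smul_measure, integral_smul_measure, integral_dirac, integral_dirac]

lemma integral_ofReal_smul_dirac_add_ofReal_smul_dirac (f : X → ℝ) (a b : X) {p q : ℝ}
    (hp : 0 ≤ p) (hq : 0 ≤ q) :
    ∫ x, f x ∂(ENNReal.ofReal p • Measure.dirac a + ENNReal.ofReal q • Measure.dirac b) =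
      p * f a + q * f b := by
  rw [integral_smul_dirac_add_smul_dirac f a b ENNReal.ofReal_ne_top ENNReal.ofReal_ne_top,
    ENNReal.toReal_ofReal hp, ENNReal.toReal_ofReal hq, smul_eq_mul, smul_eq_mul]

end TwoPoint

lemma ae_eq_or_eq_of_integral_sub_mul_sub_eq_zero {Q : Measure ℝ} {α β : ℝ}
    (hQ : ∀ᵐ t ∂Q, t ∈ Icc α β) (hint : Integrable (fun t => (β - t) * (t - α)) Q)
    (h0 : ∫ t, (β - t) * (t - α) ∂Q = 0) : ∀ᵐ t ∂Q, t = α ∨ t = β := by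
  have hnonneg : 0 ≤ᵐ[Q] fun t => (β - t) * (t - α) := by
    filter_upwards [hQ] with t ht using mul_nonneg (sub_nonneg.2 ht.2) (sub_nonneg.2 ht.1)
  filter_upwards [(integral_eq_zero_iff_of_nonneg_ae hnonneg hint).1 h0] with t ht
  rcases mul_eq_zero.1 ht with h | h
  · exact Or.inr (sub_eq_zero.1 h).symm
  · exact Or.inl (sub_eq_zero.1 h)

lemma sub_mul_sub_eq_affine_sub_sq (α β : ℝ) :
    (fun t : ℝ => (β - t) * (t - α)) = fun t => ((α + β) * t - t ^ 2) - α * β := by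
  funext t; ring

lemma integrable_sub_mul_sub {Q : Measure ℝ} [IsFiniteMeasure Q] (α β : ℝ)
    (h₁ : Integrable id Q) (h₂ : Integrable (fun t => t ^ 2) Q) :
    Integrable (fun t => (β - t) * (t - α)) Q := by
  rw [sub_mul_sub_eq_affine_sub_sq]
  exact ((h₁.const_mul (α + β)).sub h₂).sub (integrable_const _)

lemma integral_sub_mul_sub {Q : Measure ℝ} [IsProbabilityMeasure Q] (α β : ℝ)
    (h₁ : Integrable id Q) (h₂ : Integrable (fun t => t ^ 2) Q) :
    ∫ t, (β - t) * (t - α) ∂Q = (α + β) * ∫ t, t ∂Q - ∫ t, t ^ 2 ∂Q - α * β := by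
  have h₁' : Integrable (fun t => (α + β) * t) Q := h₁.const_mul _
  have h₁₂ : Integrable (fun t => (α + β) * t - t ^ 2) Q := h₁'.sub h₂
  rw [sub_mul_sub_eq_affine_sub_sq, integral_sub h₁₂ (integrable_const _),
    integral_sub h₁' h₂, integral_const_mul, integral_const, probReal_univ, one_smul]

lemma weights_eq_of_sum_eq_one_of_mean_eq {α β μ p q : ℝ} (hab : α ≠ β) (hsum : p + q = 1)
    (hmean : p * α + q * β = μ) : p = (β - μ) / (β - α) ∧ q = (μ - α) / (β - α) := by
  have hne : β - α ≠ 0 := sub_ne_zero.2 hab.symm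
  constructor <;> rw [eq_div_iff hne]
  · linear_combination β * hsum - hmean
  · linear_combination hmean - α * hsum

lemma eq_twoPoint_of_moments {Q : Measure ℝ} [IsProbabilityMeasure Q] {α β μ : ℝ} (hab : α < β)
    (hQ : ∀ᵐ t ∂Q, t ∈ Icc α β) (h₁ : Integrable id Q) (h₂ : Integrable (fun t => t ^ 2) Q)
    (hm₁ : ∫ t, t ∂Q = μ) (hm₂ : ∫ t, t ^ 2 ∂Q = μ ^ 2 + (β - μ) * (μ - α)) :
    Q = ENNReal.ofReal ((β - μ) / (β - α)) • Measure.dirac α +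
      ENNReal.ofReal ((μ - α) / (β - α)) • Measure.dirac β := by
  have hpair : ∀ᵐ t ∂Q, t = α ∨ t = β :=
    ae_eq_or_eq_of_integral_sub_mul_sub_eq_zero hQ (integrable_sub_mul_sub α β h₁ h₂)
      (by rw [integral_sub_mul_sub α β h₁ h₂, hm₁, hm₂]; ring)
  have hdecomp : Q = Q {α} • Measure.dirac α + Q {β} • Measure.dirac β := by
    simpa using (Measure.ae_eq_or_eq_iff_map_eq_dirac_add_dirac aemeasurable_id hab.ne).1 hpair
  have hintegral (f : ℝ → ℝ) : ∫ t, f t ∂Q = (Q {α}).toReal * f α + (Q {β}).toReal * f β := by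
    conv_lhs => rw [hdecomp]
    exact integral_smul_dirac_add_smul_dirac f α β (measure_ne_top _ _) (measure_ne_top _ _)
  have hsum : (Q {α}).toReal + (Q {β}).toReal = 1 := by
    simpa using (hintegral fun _ => 1).symm
  obtain ⟨hp, hq⟩ := weights_eq_of_sum_eq_one_of_mean_eq hab.ne hsum (hm₁ ▸ (hintegral id).symm)
  rwa [← hp, ← hq, ENNReal.ofReal_toReal (measure_ne_top _ _),
    ENNReal.ofReal_toReal (measure_ne_top _ _)]

/-- If α < β, μ ∈ [α,β] and σ² = (β−μ)(μ−α), then the set of probability measures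
on [α,β] with mean μ and second moment μ²+σ² is exactly the two-point measure with
mass (β−μ)/(β−α) at α and mass (μ−α)/(β−α) at β. -/
theorem moment_set_singleton (α β μ σ : ℝ) (hab : α < β) (hμ : μ ∈ Set.Icc α β)
    (hσ : σ ^ 2 = (β - μ) * (μ - α)) :
    {Q : Measure ℝ | IsProbabilityMeasure Q ∧ Q (Set.Icc α β)ᶜ = 0 ∧
        Integrable id Q ∧ Integrable (fun t => t ^ 2) Q ∧
        (∫ t, t ∂Q) = μ ∧ (∫ t, t ^ 2 ∂Q) = μ ^ 2 + σ ^ 2} =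
      {ENNReal.ofReal ((β - μ) / (β - α)) • Measure.dirac α +
        ENNReal.ofReal ((μ - α) / (β - α)) • Measure.dirac β} := by
  have hba : 0 < β - α := sub_pos.2 hab
  have hp : 0 ≤ (β - μ) / (β - α) := div_nonneg (sub_nonneg.2 hμ.2) hba.le
  have hq : 0 ≤ (μ - α) / (β - α) := div_nonneg (sub_nonneg.2 hμ.1) hba.le
  ext Q
  simp only [mem_ofPred_eq, mem_singleton_iff]
  refine ⟨fun ⟨_, hsupp, h₁, h₂, hm₁, hm₂⟩ =>
    eq_twoPoint_of_moments hab (mem_ae_iff.2 hsupp) h₁ h₂ hm₁ (hσ ▸ hm₂), ?_⟩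
  rintro rfl
  refine ⟨isProbabilityMeasure_ofReal_smul_dirac_add α β hp hq (by field_simp; ring), ?_,
    integrable_smul_dirac_add_smul_dirac _ α β ENNReal.ofReal_ne_top ENNReal.ofReal_ne_top,
    integrable_smul_dirac_add_smul_dirac _ α β ENNReal.ofReal_ne_top ENNReal.ofReal_ne_top,
    ?_, ?_⟩
  · simp [Measure.dirac_apply' _ measurableSet_Icc.compl, hab.le]
  · rw [integral_ofReal_smul_dirac_add_ofReal_smul_dirac (fun t => t) α β hp hq]
    field_simp; ring
  · rw [integral_ofReal_smul_dirac_add_ofReal_smul_dirac _ α β hp hq, hσ]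
    field_simp; ring
end

section
/- For x ≥ (μ²+σ²)/(2μ) with μ,σ > 0, the supremum of E_Q[|x − D|] over all probability measures Q on ℝ₊ with mean μ and second moment μ²+σ² equals √((x−μ)² + σ²), attained by a two-point measure supported at x − √((x−μ)²+σ²) and x + √((x−μ)²+σ²). -/
open MeasureTheory Set

/-- A two-point probability measure with mass p at d₁ and mass 1-p at d₂. -/
noncomputable def twoPoint (p d₁ d₂ : ℝ) : MeasureTheory.Measure ℝ :=
  ENNReal.ofReal p • MeasureTheory.Measure.dirac d₁ +
    ENNReal.ofReal (1 - p) • MeasureTheory.Measure.dirac d₂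

/-! For every admissible law, Jensen gives `E|x - D| ≤ √(E (x - D)²) = √((x - μ)² + σ²) =: F`.
Equality forces `|x - D| ≡ F`, i.e. a law on `{x - F, x + F}`; its weight `(F + (x - μ)) / (2F)`
at `x - F` is dictated by the mean, and the second moment then comes out as `μ² + σ²` because
`F² - (x - μ)² = σ²`. The hypothesis on `x` is equivalent to `F ≤ x`, which puts the law on `ℝ₊`. -/

section Moments

variable {Ω : Type*} [MeasurableSpace Ω] {Q : Measure Ω} [IsProbabilityMeasure Q]

theorem sq_integral_le_integral_sq {f : Ω → ℝ} (hf : MemLp f 2 Q) :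
    (∫ ω, f ω ∂Q) ^ 2 ≤ ∫ ω, f ω ^ 2 ∂Q := by
  have := ProbabilityTheory.variance_nonneg f Q
  rw [ProbabilityTheory.variance_eq_sub hf] at this
  simpa using this

theorem integral_abs_le_sqrt_integral_sq {f : Ω → ℝ} (hf : MemLp f 2 Q) :
    ∫ ω, |f ω| ∂Q ≤ Real.sqrt (∫ ω, f ω ^ 2 ∂Q) := by
  rw [Real.le_sqrt (integral_nonneg fun _ => abs_nonneg _)
    (integral_nonneg fun _ => sq_nonneg _)]
  simpa only [sq_abs] using sq_integral_le_integral_sq (f := fun ω => |f ω|) hf.abs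

end Moments

theorem integral_sub_sq {Q : Measure ℝ} [IsProbabilityMeasure Q]
    (h₁ : Integrable id Q) (h₂ : Integrable (fun t => t ^ 2) Q) (x : ℝ) :
    ∫ t, (x - t) ^ 2 ∂Q = x ^ 2 - 2 * x * ∫ t, t ∂Q + ∫ t, t ^ 2 ∂Q := by
  have h₁' : Integrable (fun t : ℝ => 2 * x * t) Q := h₁.const_mul _
  have hquad : Integrable (fun t : ℝ => x ^ 2 - 2 * x * t) Q := (integrable_const _).sub h₁'
  simp_rw [sub_sq]
  rw [integral_add hquad h₂, integral_sub (integrable_const _) h₁',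
    integral_const_mul]
  simp

theorem integral_abs_sub_le_sqrt {Q : Measure ℝ} [IsProbabilityMeasure Q] {μ σ : ℝ}
    (h₂ : Integrable (fun t => t ^ 2) Q) (hm₁ : ∫ t, t ∂Q = μ)
    (hm₂ : ∫ t, t ^ 2 ∂Q = μ ^ 2 + σ ^ 2) (x : ℝ) :
    ∫ t, |x - t| ∂Q ≤ Real.sqrt ((x - μ) ^ 2 + σ ^ 2) := by
  have hid : MemLp id 2 Q := (memLp_two_iff_integrable_sq aestronglyMeasurable_id).2 h₂
  have hvar : ∫ t, (x - t) ^ 2 ∂Q = (x - μ) ^ 2 + σ ^ 2 := by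
    rw [integral_sub_sq (hid.integrable one_le_two) h₂, hm₁, hm₂]
    ring
  rw [← hvar]
  exact integral_abs_le_sqrt_integral_sq ((memLp_const x).sub hid)

namespace twoPoint

variable {p d₁ d₂ : ℝ}

theorem isProbabilityMeasure (hp₀ : 0 ≤ p) (hp₁ : p ≤ 1) :
    IsProbabilityMeasure (twoPoint p d₁ d₂) := by
  constructor
  simp only [twoPoint, Measure.add_apply, Measure.smul_apply, smul_eq_mul, measure_univ, mul_one]
  rw [← ENNReal.ofReal_add hp₀ (sub_nonneg.2 hp₁), add_sub_cancel, ENNReal.ofReal_one]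

theorem apply_eq_zero {s : Set ℝ} (hs : MeasurableSet s) (h₁ : d₁ ∉ s) (h₂ : d₂ ∉ s) :
    twoPoint p d₁ d₂ s = 0 := by
  simp [twoPoint, Measure.dirac_apply' _ hs, h₁, h₂]

theorem integrable (f : ℝ → ℝ) : Integrable f (twoPoint p d₁ d₂) :=
  ((integrable_dirac enorm_lt_top).smul_measure ENNReal.ofReal_ne_top).add_measure
    ((integrable_dirac enorm_lt_top).smul_measure ENNReal.ofReal_ne_top)

theorem integral_eq (hp₀ : 0 ≤ p) (hp₁ : p ≤ 1) (f : ℝ → ℝ) :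
    ∫ t, f t ∂twoPoint p d₁ d₂ = p * f d₁ + (1 - p) * f d₂ := by
  rw [twoPoint, integral_add_measure
      ((integrable_dirac enorm_lt_top).smul_measure ENNReal.ofReal_ne_top)
      ((integrable_dirac enorm_lt_top).smul_measure ENNReal.ofReal_ne_top),
    integral_smul_measure, integral_smul_measure, integral_dirac, integral_dirac,
    ENNReal.toReal_ofReal hp₀, ENNReal.toReal_ofReal (sub_nonneg.2 hp₁), smul_eq_mul, smul_eq_mul]

theorem integral_abs_sub_sub_add (hp₀ : 0 ≤ p) (hp₁ : p ≤ 1) {x F : ℝ} (hF : 0 ≤ F) :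
    ∫ t, |x - t| ∂twoPoint p (x - F) (x + F) = F := by
  rw [integral_eq hp₀ hp₁, sub_sub_cancel, sub_add_cancel_left, abs_neg, abs_of_nonneg hF]
  ring

variable {x m F : ℝ}

theorem weight_nonneg (hm : |x - m| ≤ F) : 0 ≤ (F + (x - m)) / (2 * F) :=
  div_nonneg (by linarith [neg_abs_le (x - m)]) (by linarith [abs_nonneg (x - m)])

theorem weight_le_one (hF : 0 < F) (hm : |x - m| ≤ F) : (F + (x - m)) / (2 * F) ≤ 1 := by
  rw [div_le_one (by positivity)]
  linarith [le_abs_self (x - m)]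

theorem integral_id_sub_add (hF : 0 < F) (hm : |x - m| ≤ F) :
    ∫ t, t ∂twoPoint ((F + (x - m)) / (2 * F)) (x - F) (x + F) = m := by
  rw [integral_eq (weight_nonneg hm) (weight_le_one hF hm)]
  field_simp
  ring

theorem integral_sq_sub_add (hF : 0 < F) (hm : |x - m| ≤ F) :
    ∫ t, t ^ 2 ∂twoPoint ((F + (x - m)) / (2 * F)) (x - F) (x + F) =
      m ^ 2 + (F ^ 2 - (x - m) ^ 2) := by
  rw [integral_eq (weight_nonneg hm) (weight_le_one hF hm)]
  field_simp
  ring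

end twoPoint

theorem sqrt_sub_sq_add_sq_le {μ σ x : ℝ} (hμ : 0 < μ) (hx : (μ ^ 2 + σ ^ 2) / (2 * μ) ≤ x) :
    Real.sqrt ((x - μ) ^ 2 + σ ^ 2) ≤ x := by
  rw [div_le_iff₀ (by positivity)] at hx
  rw [Real.sqrt_le_left]
  · nlinarith
  · nlinarith [sq_nonneg σ]

theorem sq_div_sq_add_sub_sq {μ σ x F : ℝ} (hσ : σ ≠ 0) (hF : F ^ 2 = (x - μ) ^ 2 + σ ^ 2) :
    σ ^ 2 / (σ ^ 2 + (x - F - μ) ^ 2) = (F + (x - μ)) / (2 * F) := by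
  have hF₀ : F ≠ 0 := by
    rintro rfl
    nlinarith [sq_nonneg (x - μ), sq_pos_of_ne_zero hσ]
  rw [div_eq_div_iff (by positivity) (by positivity)]
  linear_combination (x - μ - F) * hF

/-- For x ≥ (μ²+σ²)/(2μ), the worst-case expectation of |x−D| over probability
measures on ℝ₊ with mean μ and second moment μ²+σ² equals √((x−μ)²+σ²), attained
by a two-point measure at x ∓ √((x−μ)²+σ²). -/
theorem scarf_sup_abs_large_x (μ σ x : ℝ) (hμ : 0 < μ) (hσ : 0 < σ)
    (hx : (μ ^ 2 + σ ^ 2) / (2 * μ) ≤ x) :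
    (∀ Q : Measure ℝ, IsProbabilityMeasure Q → Q (Set.Ici (0:ℝ))ᶜ = 0 →
      Integrable id Q → Integrable (fun t => t ^ 2) Q →
      (∫ t, t ∂Q) = μ → (∫ t, t ^ 2 ∂Q) = μ ^ 2 + σ ^ 2 →
      (∫ t, |x - t| ∂Q) ≤ Real.sqrt ((x - μ) ^ 2 + σ ^ 2)) ∧
    (let F := Real.sqrt ((x - μ) ^ 2 + σ ^ 2)
     let Qs := twoPoint (σ ^ 2 / (σ ^ 2 + (x - F - μ) ^ 2)) (x - F) (x + F)
     IsProbabilityMeasure Qs ∧ Qs (Set.Ici (0:ℝ))ᶜ = 0 ∧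
     Integrable id Qs ∧ Integrable (fun t => t ^ 2) Qs ∧
     (∫ t, t ∂Qs) = μ ∧ (∫ t, t ^ 2 ∂Qs) = μ ^ 2 + σ ^ 2 ∧
     (∫ t, |x - t| ∂Qs) = F) := by
  refine ⟨fun Q _ _ _ h₂ hm₁ hm₂ => integral_abs_sub_le_sqrt h₂ hm₁ hm₂ x, ?_⟩
  intro F
  have hF : 0 < F := Real.sqrt_pos.2 (by positivity)
  have hxμ : |x - μ| ≤ F := Real.abs_le_sqrt (le_add_of_nonneg_right (sq_nonneg σ))
  have hFx : F ≤ x := sqrt_sub_sq_add_sq_le hμ hx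
  have hF₂ : F ^ 2 = (x - μ) ^ 2 + σ ^ 2 := Real.sq_sqrt (by positivity)
  have hp₀ := twoPoint.weight_nonneg hxμ
  have hp₁ := twoPoint.weight_le_one hF hxμ
  rw [sq_div_sq_add_sub_sq hσ.ne' hF₂]
  refine ⟨twoPoint.isProbabilityMeasure hp₀ hp₁, ?_, twoPoint.integrable _,
    twoPoint.integrable _, twoPoint.integral_id_sub_add hF hxμ, ?_,
    twoPoint.integral_abs_sub_sub_add hp₀ hp₁ hF.le⟩
  · exact twoPoint.apply_eq_zero measurableSet_Ici.compl
      (notMem_compl_iff.2 (sub_nonneg.2 hFx)) (notMem_compl_iff.2 (add_nonneg (hF.le.trans hFx) hF.le))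
  · rw [twoPoint.integral_sq_sub_add hF hxμ, hF₂]
    ring
end

section
/- For the piecewise-linear function ζ(d) = max{−d + c₁, 0, d − c₂} with 0 < c₁ < c₂, setting η = (c₁+c₂)/2 and F(η) = √((η−μ)²+σ²), if σ > 0, (1/4)(2μ−3c₁+c₂)(3c₂−c₁−2μ) ≤ σ² and η − F(η) ≥ 0, then the supremum of ∫ζ dQ over probability measures Q on ℝ₊ with mean μ and second moment μ²+σ² is attained uniquely by the two-point measure placing mass σ²/(σ²+(η−F(η)−μ)²) at η−F(η) and the remaining mass at η+F(η). -/
/-!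
Let `a = η - F(η)` and `b = η + F(η)`. The hinge `ζ` lies below the parabola
`q t = c₁ - a + (t - a) * (t - b) / (b - a)`, which is tangent to the slanted legs of `ζ`
at `a` and `b` and stays above `0` because `b - a ≥ 2 (c₂ - c₁)`; this is the condition
on `σ²`. The points `a`, `b` are chosen so that `(t - a) * (t - b)` has mean zero under
every `Q` of the moment family, so `∫ ζ dQ ≤ ∫ q dQ = c₁ - a`, with equality for the
two-point law on `{a, b}`. Equality forces `Q` onto the contact set of `ζ` and `q`, where
`(t - a) * (t - b) ≤ 0`; having mean zero, this quadratic then vanishes `Q`-a.e., so `Q` is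
carried by `{a, b}`, and such a law is determined by its mean.
-/

open MeasureTheory Set

/-- Membership in the moment family: probability measures on ℝ₊ with mean μ
and second moment μ²+σ². -/
def inMomentFamily (μ σ : ℝ) (Q : MeasureTheory.Measure ℝ) : Prop :=
  MeasureTheory.IsProbabilityMeasure Q ∧ Q (Set.Ici (0:ℝ))ᶜ = 0 ∧
    MeasureTheory.Integrable id Q ∧ MeasureTheory.Integrable (fun t => t ^ 2) Q ∧
    (∫ t, t ∂Q) = μ ∧ (∫ t, t ^ 2 ∂Q) = μ ^ 2 + σ ^ 2

def hinge (c₁ c₂ d : ℝ) : ℝ := max (max (-d + c₁) 0) (d - c₂)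

section TwoPoint

variable {p a b : ℝ}

lemma integrable_twoPoint_s10 (f : ℝ → ℝ) : Integrable f (twoPoint p a b) :=
  ((integrable_dirac enorm_lt_top).smul_measure ENNReal.ofReal_ne_top).add_measure
    ((integrable_dirac enorm_lt_top).smul_measure ENNReal.ofReal_ne_top)

lemma integral_twoPoint_s10 (hp₀ : 0 ≤ p) (hp₁ : p ≤ 1) (f : ℝ → ℝ) :
    ∫ t, f t ∂(twoPoint p a b) = p * f a + (1 - p) * f b := by
  rw [twoPoint, integral_add_measure
      ((integrable_dirac enorm_lt_top).smul_measure ENNReal.ofReal_ne_top)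
      ((integrable_dirac enorm_lt_top).smul_measure ENNReal.ofReal_ne_top),
    integral_smul_measure, integral_smul_measure, integral_dirac, integral_dirac,
    ENNReal.toReal_ofReal hp₀, ENNReal.toReal_ofReal (sub_nonneg.2 hp₁), smul_eq_mul,
    smul_eq_mul]

lemma isProbabilityMeasure_twoPoint (hp₀ : 0 ≤ p) (hp₁ : p ≤ 1) :
    IsProbabilityMeasure (twoPoint p a b) := by
  constructor
  simp [twoPoint, ← ENNReal.ofReal_add hp₀ (sub_nonneg.2 hp₁)]

lemma twoPoint_compl_Ici (ha : 0 ≤ a) (hb : 0 ≤ b) :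
    twoPoint p a b (Ici 0)ᶜ = 0 := by
  simp [twoPoint, ha, hb]

lemma inMomentFamily_twoPoint {μ σ : ℝ} (ha : 0 ≤ a) (hab : a < b) (haμ : a ≤ μ)
    (hμb : μ ≤ b) (hσ : σ ^ 2 = (μ - a) * (b - μ)) :
    inMomentFamily μ σ (twoPoint ((b - μ) / (b - a)) a b) := by
  have hba : 0 < b - a := sub_pos.2 hab
  have hp₀ : 0 ≤ (b - μ) / (b - a) := div_nonneg (by linarith) hba.le
  have hp₁ : (b - μ) / (b - a) ≤ 1 := (div_le_one hba).2 (by linarith)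
  refine ⟨isProbabilityMeasure_twoPoint hp₀ hp₁, twoPoint_compl_Ici ha (ha.trans hab.le),
    integrable_twoPoint_s10 _, integrable_twoPoint_s10 _, ?_, ?_⟩
  · rw [integral_twoPoint_s10 hp₀ hp₁]
    field_simp
    ring
  · rw [integral_twoPoint_s10 hp₀ hp₁]
    field_simp
    linear_combination (a - b) * hσ

lemma exists_eq_twoPoint_of_ae_eq_or_eq {Q : Measure ℝ} [IsProbabilityMeasure Q] (hab : a ≠ b)
    (hQ : ∀ᵐ t ∂Q, t = a ∨ t = b) :
    ∃ p, 0 ≤ p ∧ p ≤ 1 ∧ Q = twoPoint p a b := by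
  have hdisj : Disjoint ({a} : Set ℝ) {b} := disjoint_singleton.2 hab
  have hmass : Q.real {a} + Q.real {b} = 1 := by
    rw [← measureReal_union hdisj (measurableSet_singleton b), singleton_union,
      measureReal_def, (ae_mem_iff_measure_eq (s := {a, b})
        ((measurableSet_singleton b).insert a).nullMeasurableSet).1 hQ, measure_univ,
      ENNReal.toReal_one]
  refine ⟨Q.real {a}, measureReal_nonneg,
    by linarith [measureReal_nonneg (μ := Q) (s := {b})], ?_⟩
  rw [twoPoint, ← hmass, add_sub_cancel_left, ofReal_measureReal, ofReal_measureReal,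
    ← Measure.restrict_singleton, ← Measure.restrict_singleton,
    ← Measure.restrict_union hdisj (measurableSet_singleton b), singleton_union]
  exact (Measure.restrict_eq_self_of_ae_mem hQ).symm

lemma eq_twoPoint_of_ae_eq_or_eq {Q : Measure ℝ} [IsProbabilityMeasure Q] (hab : a ≠ b)
    (hQ : ∀ᵐ t ∂Q, t = a ∨ t = b) :
    Q = twoPoint ((b - ∫ t, t ∂Q) / (b - a)) a b := by
  obtain ⟨p, hp₀, hp₁, rfl⟩ := exists_eq_twoPoint_of_ae_eq_or_eq hab hQ
  rw [integral_twoPoint_s10 hp₀ hp₁]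
  congr 1
  field_simp [sub_ne_zero.2 hab.symm]
  ring

end TwoPoint

section Hinge

variable {c₁ c₂ a b : ℝ}

lemma continuous_hinge : Continuous (hinge c₁ c₂) := by
  unfold hinge
  fun_prop

noncomputable def hingeMajorant (c₁ a b t : ℝ) : ℝ := c₁ - a + (t - a) * (t - b) / (b - a)

lemma hingeMajorant_sub_left (hab : a ≠ b) (t : ℝ) :
    hingeMajorant c₁ a b t - (-t + c₁) = (t - a) ^ 2 / (b - a) := by
  have := sub_ne_zero.2 hab.symm
  unfold hingeMajorant
  field_simp
  ring

lemma hingeMajorant_sub_right (hsum : a + b = c₁ + c₂) (hab : a ≠ b) (t : ℝ) :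
    hingeMajorant c₁ a b t - (t - c₂) = (t - b) ^ 2 / (b - a) := by
  have := sub_ne_zero.2 hab.symm
  unfold hingeMajorant
  rw [show c₂ = a + b - c₁ by linarith]
  field_simp
  ring

lemma hinge_le_hingeMajorant (hsum : a + b = c₁ + c₂) (hab : a < b)
    (hwidth : 2 * (c₂ - c₁) ≤ b - a) (t : ℝ) :
    hinge c₁ c₂ t ≤ hingeMajorant c₁ a b t := by
  have hba : 0 < b - a := sub_pos.2 hab
  refine max_le (max_le ?_ ?_) ?_ <;> rw [← sub_nonneg]
  · rw [hingeMajorant_sub_left hab.ne]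
    positivity
  · rw [show hingeMajorant c₁ a b t - 0
        = ((2 * t - a - b) ^ 2 + (b - a) * (b - a - 2 * (c₂ - c₁))) / (4 * (b - a)) by
      unfold hingeMajorant; rw [show c₂ = a + b - c₁ by linarith]; field_simp; ring]
    exact div_nonneg (add_nonneg (sq_nonneg _) (mul_nonneg hba.le (sub_nonneg.2 hwidth)))
      (by positivity)
  · rw [hingeMajorant_sub_right hsum hab.ne]
    positivity

lemma hinge_lt_hingeMajorant (hsum : a + b = c₁ + c₂) (hab : a < b)
    (hwidth : 2 * (c₂ - c₁) ≤ b - a) {t : ℝ} (ht : 0 < (t - a) * (t - b)) :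
    hinge c₁ c₂ t < hingeMajorant c₁ a b t := by
  have hba : 0 < b - a := sub_pos.2 hab
  have hta : t - a ≠ 0 := left_ne_zero_of_mul ht.ne'
  have htb : t - b ≠ 0 := right_ne_zero_of_mul ht.ne'
  refine max_lt (max_lt ?_ ?_) ?_ <;> rw [← sub_pos]
  · rw [hingeMajorant_sub_left hab.ne]
    positivity
  · have : 0 < (t - a) * (t - b) / (b - a) := by positivity
    unfold hingeMajorant
    linarith
  · rw [hingeMajorant_sub_right hsum hab.ne]
    positivity

lemma hinge_left (hsum : a + b = c₁ + c₂) (hab : a < b)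
    (hwidth : 2 * (c₂ - c₁) ≤ b - a) :
    hinge c₁ c₂ a = c₁ - a := by
  unfold hinge
  rw [max_eq_left (le_max_of_le_left (by linarith)), max_eq_left (by linarith)]
  linarith

lemma hinge_right (hsum : a + b = c₁ + c₂) (hab : a < b)
    (hwidth : 2 * (c₂ - c₁) ≤ b - a) :
    hinge c₁ c₂ b = c₁ - a := by
  unfold hinge
  rw [max_eq_right (max_le (by linarith) (by linarith))]
  linarith

end Hinge

section MomentFamily

variable {μ σ : ℝ} {Q : Measure ℝ}

lemma inMomentFamily.integrable_and_integral_sub_mul_sub (hQ : inMomentFamily μ σ Q) (a b : ℝ) :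
    Integrable (fun t => (t - a) * (t - b)) Q ∧
      ∫ t, (t - a) * (t - b) ∂Q = μ ^ 2 + σ ^ 2 - (a + b) * μ + a * b := by
  obtain ⟨_, _, hQ₁, hQ₂, hm₁, hm₂⟩ := hQ
  have hexp : (fun t : ℝ => (t - a) * (t - b)) = fun t => t ^ 2 - (a + b) * t + a * b := by
    ext t; ring
  have hlin : Integrable (fun t : ℝ => (a + b) * t) Q := hQ₁.const_mul _
  have hquad : Integrable (fun t : ℝ => t ^ 2 - (a + b) * t) Q := hQ₂.sub hlin
  rw [hexp, integral_add hquad (integrable_const _), integral_sub hQ₂ hlin, integral_const_mul,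
    integral_const, probReal_univ, hm₁, hm₂, one_smul]
  exact ⟨hquad.add (integrable_const _), rfl⟩

lemma inMomentFamily.integrable_hinge (hQ : inMomentFamily μ σ Q) (c₁ c₂ : ℝ) :
    Integrable (hinge c₁ c₂) Q := by
  obtain ⟨_, _, hQ₁, _⟩ := hQ
  refine (hQ₁.abs.add (integrable_const (|c₁| + |c₂|))).mono'
    continuous_hinge.aestronglyMeasurable (ae_of_all _ fun t => ?_)
  have h₀ : 0 ≤ hinge c₁ c₂ t := le_max_of_le_left (le_max_right _ _)
  rw [Real.norm_eq_abs, abs_of_nonneg h₀]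
  refine max_le (max_le ?_ ?_) ?_ <;>
  · simp only [Pi.add_apply, id]
    linarith [neg_abs_le t, le_abs_self t, le_abs_self c₁, neg_abs_le c₂, abs_nonneg c₁,
      abs_nonneg c₂, abs_nonneg t]

lemma inMomentFamily.integral_sub_mul_sub_eq_zero (hQ : inMomentFamily μ σ Q) {a b : ℝ}
    (hσ : σ ^ 2 = (μ - a) * (b - μ)) : ∫ t, (t - a) * (t - b) ∂Q = 0 := by
  rw [(hQ.integrable_and_integral_sub_mul_sub a b).2, hσ]
  ring

lemma inMomentFamily.integral_hingeMajorant (hQ : inMomentFamily μ σ Q) {c₁ a b : ℝ}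
    (hσ : σ ^ 2 = (μ - a) * (b - μ)) :
    Integrable (hingeMajorant c₁ a b) Q ∧ ∫ t, hingeMajorant c₁ a b t ∂Q = c₁ - a := by
  have := hQ.1
  have hint := (hQ.integrable_and_integral_sub_mul_sub a b).1
  refine ⟨(integrable_const _).add (hint.div_const _), ?_⟩
  unfold hingeMajorant
  rw [integral_add (integrable_const _) (hint.div_const _), integral_div,
    hQ.integral_sub_mul_sub_eq_zero hσ, integral_const, probReal_univ, one_smul, zero_div,
    add_zero]

variable {c₁ c₂ a b : ℝ}

lemma inMomentFamily.integral_hinge_le (hQ : inMomentFamily μ σ Q) (hsum : a + b = c₁ + c₂)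
    (hab : a < b) (hwidth : 2 * (c₂ - c₁) ≤ b - a) (hσ : σ ^ 2 = (μ - a) * (b - μ)) :
    ∫ t, hinge c₁ c₂ t ∂Q ≤ c₁ - a := by
  obtain ⟨hMint, hMval⟩ := hQ.integral_hingeMajorant (c₁ := c₁) hσ
  exact hMval ▸ integral_mono (hQ.integrable_hinge c₁ c₂) hMint
    (hinge_le_hingeMajorant hsum hab hwidth)

lemma inMomentFamily.ae_eq_or_eq_of_integral_hinge_eq (hQ : inMomentFamily μ σ Q)
    (hsum : a + b = c₁ + c₂) (hab : a < b) (hwidth : 2 * (c₂ - c₁) ≤ b - a)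
    (hσ : σ ^ 2 = (μ - a) * (b - μ)) (h : ∫ t, hinge c₁ c₂ t ∂Q = c₁ - a) :
    ∀ᵐ t ∂Q, t = a ∨ t = b := by
  obtain ⟨hMint, hMval⟩ := hQ.integral_hingeMajorant (c₁ := c₁) hσ
  have hint := hQ.integrable_hinge c₁ c₂
  have htouch : ∀ᵐ t ∂Q, hingeMajorant c₁ a b t - hinge c₁ c₂ t = 0 :=
    (integral_eq_zero_iff_of_nonneg
      (fun t => sub_nonneg.2 (hinge_le_hingeMajorant hsum hab hwidth t)) (hMint.sub hint)).1
      (by rw [integral_sub hMint hint, hMval, h, sub_self])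
  have hroots : ∀ᵐ t ∂Q, -((t - a) * (t - b)) = 0 := by
    refine (integral_eq_zero_iff_of_nonneg_ae (f := fun t => -((t - a) * (t - b))) ?_
      (hQ.integrable_and_integral_sub_mul_sub a b).1.neg).1
      (by rw [integral_neg, hQ.integral_sub_mul_sub_eq_zero hσ, neg_zero])
    filter_upwards [htouch] with t ht
    exact neg_nonneg.2 (not_lt.1 fun hpos =>
      (hinge_lt_hingeMajorant hsum hab hwidth hpos).ne' (sub_eq_zero.1 ht))
  filter_upwards [hroots] with t ht
  rcases mul_eq_zero.1 (neg_eq_zero.1 ht) with h | h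
  exacts [.inl (sub_eq_zero.1 h), .inr (sub_eq_zero.1 h)]

end MomentFamily

lemma integral_hinge_twoPoint {c₁ c₂ a b p : ℝ} (hsum : a + b = c₁ + c₂) (hab : a < b)
    (hwidth : 2 * (c₂ - c₁) ≤ b - a) (hp₀ : 0 ≤ p) (hp₁ : p ≤ 1) :
    ∫ t, hinge c₁ c₂ t ∂(twoPoint p a b) = c₁ - a := by
  rw [integral_twoPoint_s10 hp₀ hp₁, hinge_left hsum hab hwidth, hinge_right hsum hab hwidth]
  ring

theorem natarajan_unique_maximizer_general (μ σ c₁ c₂ : ℝ) (hσ : 0 < σ)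
    (hcond : (1/4) * (2*μ - 3*c₁ + c₂) * (3*c₂ - c₁ - 2*μ) ≤ σ ^ 2)
    (hpos : 0 ≤ (c₁ + c₂)/2 - Real.sqrt (((c₁ + c₂)/2 - μ) ^ 2 + σ ^ 2)) :
    let η := (c₁ + c₂)/2
    let Fη := Real.sqrt ((η - μ) ^ 2 + σ ^ 2)
    let Qs := twoPoint (σ ^ 2 / (σ ^ 2 + (η - Fη - μ) ^ 2)) (η - Fη) (η + Fη)
    let ζ := fun d : ℝ => max (max (-d + c₁) 0) (d - c₂)
    inMomentFamily μ σ Qs ∧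
    (∀ Q : MeasureTheory.Measure ℝ, inMomentFamily μ σ Q →
      (∫ t, ζ t ∂Q) ≤ ∫ t, ζ t ∂Qs) ∧
    (∀ Q : MeasureTheory.Measure ℝ, inMomentFamily μ σ Q →
      (∫ t, ζ t ∂Q) = (∫ t, ζ t ∂Qs) → Q = Qs) := by
  intro η F Qs ζ
  have hη : η = (c₁ + c₂) / 2 := rfl
  have hF : 0 < F := Real.sqrt_pos.2 (by positivity)
  have hF2 : F ^ 2 = (η - μ) ^ 2 + σ ^ 2 := Real.sq_sqrt (by positivity)
  have hsum : (η - F) + (η + F) = c₁ + c₂ := by ring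
  have hab : η - F < η + F := by linarith
  have hwidth : 2 * (c₂ - c₁) ≤ (η + F) - (η - F) := by
    have : (c₂ - c₁) ^ 2 ≤ (η - μ) ^ 2 + σ ^ 2 := by rw [hη]; linarith
    linarith [(abs_le.1 (Real.abs_le_sqrt this)).2]
  have hvar : σ ^ 2 = (μ - (η - F)) * ((η + F) - μ) := by linear_combination -hF2
  have haμ : η - F < μ := by nlinarith
  have hμb : μ < η + F := by nlinarith
  have hQs : Qs = twoPoint ((η + F - μ) / ((η + F) - (η - F))) (η - F) (η + F) := by
    show twoPoint (σ ^ 2 / (σ ^ 2 + (η - F - μ) ^ 2)) (η - F) (η + F) = _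
    congr 1
    rw [div_eq_div_iff (by positivity) (by linarith)]
    linear_combination (F - η + μ) * hvar
  have hmax : ∫ t, ζ t ∂Qs = c₁ - (η - F) := by
    rw [hQs]
    exact integral_hinge_twoPoint hsum hab hwidth (div_nonneg (by linarith) (by linarith))
      ((div_le_one (by linarith)).2 (by linarith))
  refine ⟨hQs ▸ inMomentFamily_twoPoint hpos hab haμ.le hμb.le hvar, fun Q hQ => ?_,
    fun Q hQ hQζ => ?_⟩
  · exact hmax ▸ hQ.integral_hinge_le hsum hab hwidth hvar
  · have hQab := hQ.ae_eq_or_eq_of_integral_hinge_eq hsum hab hwidth hvar (hQζ.trans hmax)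
    obtain ⟨_, -, -, -, hmean, -⟩ := hQ
    rw [eq_twoPoint_of_ae_eq_or_eq hab.ne hQab, hmean, hQs]

/-- For ζ(d) = max{−d+c₁, 0, d−c₂}, with 0 < c₁ < c₂, η = (c₁+c₂)/2 and
F(η) = √((η−μ)²+σ²), under the stated conditions the maximum of ∫ζ dQ over the
moment family is attained uniquely by the two-point measure with mass
σ²/(σ²+(η−F(η)−μ)²) at η−F(η) and the remaining mass at η+F(η). -/
theorem natarajan_unique_maximizer (μ σ c₁ c₂ : ℝ) (hσ : 0 < σ)
    (hc₁ : 0 < c₁) (hc : c₁ < c₂)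
    (hcond : (1/4) * (2*μ - 3*c₁ + c₂) * (3*c₂ - c₁ - 2*μ) ≤ σ ^ 2)
    (hpos : 0 ≤ (c₁ + c₂)/2 - Real.sqrt (((c₁ + c₂)/2 - μ) ^ 2 + σ ^ 2)) :
    let η := (c₁ + c₂)/2
    let Fη := Real.sqrt ((η - μ) ^ 2 + σ ^ 2)
    let Qs := twoPoint (σ ^ 2 / (σ ^ 2 + (η - Fη - μ) ^ 2)) (η - Fη) (η + Fη)
    let ζ := fun d : ℝ => max (max (-d + c₁) 0) (d - c₂)
    inMomentFamily μ σ Qs ∧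
    (∀ Q : MeasureTheory.Measure ℝ, inMomentFamily μ σ Q →
      (∫ t, ζ t ∂Q) ≤ ∫ t, ζ t ∂Qs) ∧
    (∀ Q : MeasureTheory.Measure ℝ, inMomentFamily μ σ Q →
      (∫ t, ζ t ∂Q) = (∫ t, ζ t ∂Qs) → Q = Qs) :=
  natarajan_unique_maximizer_general μ σ c₁ c₂ hσ hcond hpos
end

section
/- For 0 < c₁ < c₂, η = (c₁+c₂)/2, F(η) = √((η−μ)²+σ²), the quadratic g(d) = λ₀ + λ₁d + λ₂d² with λ₀ = ((η² + (η−μ)² + σ²)/(2F(η))) + (c₁−c₂)/2, λ₁ = −η/F(η), λ₂ = 1/(2F(η)) is tangent to −d+c₁ at d = η−F(η) and tangent to d−c₂ at d = η+F(η), and satisfies g(d) ≥ max{−d+c₁, 0, d−c₂} for all d ∈ ℝ whenever (1/4)(2μ−3c₁+c₂)(3c₂−c₁−2μ) ≤ σ². -/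
/-!
Completing the square, `g d = -d + c₁ + (d - (η - F))² / (2F) = d - c₂ + (d - (η + F))² / (2F)`
with `F = F(η)`, which gives both tangencies and both linear lower bounds at once. The minimum
of `g` is `(F - (c₂ - c₁)) / 2`, and the variance condition is exactly
`(c₂ - c₁)² ≤ (η - μ)² + σ² = F²`, so `g ≥ 0` as well.
-/

/-- The paper's quadratic `g`, with `F` standing for `F(η)` and the shift `k = (c₁ - c₂) / 2`. -/
noncomputable def dualQuadratic (η F k : ℝ) : ℝ → ℝ :=
  fun d => (η ^ 2 + F ^ 2) / (2 * F) + k + (-η / F) * d + 1 / (2 * F) * d ^ 2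

lemma hasDerivAt_affine_add_mul_sub_sq (a b c p : ℝ) :
    HasDerivAt (fun x => a + b * x + c * (x - p) ^ 2) b p :=
  ((((hasDerivAt_id' p).const_mul b).const_add a).add
    ((((hasDerivAt_id' p).sub_const p).pow 2).const_mul c)).congr_deriv (by simp)

namespace dualQuadratic

variable {η F : ℝ} (k : ℝ)

lemma eq_left_tangent (hF : F ≠ 0) :
    dualQuadratic η F k = fun d => (η + k) + (-1) * d + (2 * F)⁻¹ * (d - (η - F)) ^ 2 := by
  funext d
  simp only [dualQuadratic]
  field_simp
  ring

lemma eq_right_tangent (hF : F ≠ 0) :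
    dualQuadratic η F k = fun d => -(η - k) + 1 * d + (2 * F)⁻¹ * (d - (η + F)) ^ 2 := by
  funext d
  simp only [dualQuadratic]
  field_simp
  ring

lemma eq_vertex (hF : F ≠ 0) (d : ℝ) :
    dualQuadratic η F k d = F / 2 + k + (2 * F)⁻¹ * (d - η) ^ 2 := by
  simp only [dualQuadratic]
  field_simp
  ring

lemma apply_left_tangent (hF : F ≠ 0) :
    dualQuadratic η F k (η - F) = -(η - F) + (η + k) := by
  rw [eq_left_tangent k hF]
  ring

lemma apply_right_tangent (hF : F ≠ 0) :
    dualQuadratic η F k (η + F) = (η + F) - (η - k) := by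
  rw [eq_right_tangent k hF]
  ring

lemma hasDerivAt_left_tangent (hF : F ≠ 0) :
    HasDerivAt (dualQuadratic η F k) (-1) (η - F) := by
  rw [eq_left_tangent k hF]
  exact hasDerivAt_affine_add_mul_sub_sq _ _ _ _

lemma hasDerivAt_right_tangent (hF : F ≠ 0) :
    HasDerivAt (dualQuadratic η F k) 1 (η + F) := by
  rw [eq_right_tangent k hF]
  exact hasDerivAt_affine_add_mul_sub_sq _ _ _ _

lemma max_le (hF : 0 < F) (hk : 0 ≤ F / 2 + k) (d : ℝ) :
    max (max (-d + (η + k)) 0) (d - (η - k)) ≤ dualQuadratic η F k d := by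
  have hcoef : 0 ≤ (2 * F)⁻¹ := by positivity
  refine _root_.max_le (_root_.max_le ?left ?zero) ?right
  case left =>
    rw [eq_left_tangent k hF.ne']
    nlinarith [mul_nonneg hcoef (sq_nonneg (d - (η - F)))]
  case zero =>
    rw [eq_vertex k hF.ne']
    nlinarith [mul_nonneg hcoef (sq_nonneg (d - η))]
  case right =>
    rw [eq_right_tangent k hF.ne']
    nlinarith [mul_nonneg hcoef (sq_nonneg (d - (η + F)))]

end dualQuadratic

lemma variance_condition_eq_sq_sub_sq (μ c₁ c₂ : ℝ) :
    (1/4) * (2*μ - 3*c₁ + c₂) * (3*c₂ - c₁ - 2*μ) = (c₂ - c₁) ^ 2 - ((c₁ + c₂)/2 - μ) ^ 2 := by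
  ring

theorem dual_quadratic_tangency_general (μ σ c₁ c₂ : ℝ) (hσ : 0 < σ) :
    let η := (c₁ + c₂)/2
    let Fη := Real.sqrt ((η - μ) ^ 2 + σ ^ 2)
    let lam₀ := (η ^ 2 + (η - μ) ^ 2 + σ ^ 2) / (2 * Fη) + (c₁ - c₂)/2
    let lam₁ := -η / Fη
    let lam₂ := 1 / (2 * Fη)
    let g := fun d : ℝ => lam₀ + lam₁ * d + lam₂ * d ^ 2
    (g (η - Fη) = -(η - Fη) + c₁ ∧ HasDerivAt g (-1) (η - Fη)) ∧
    (g (η + Fη) = (η + Fη) - c₂ ∧ HasDerivAt g 1 (η + Fη)) ∧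
    ((1/4) * (2*μ - 3*c₁ + c₂) * (3*c₂ - c₁ - 2*μ) ≤ σ ^ 2 →
      ∀ d : ℝ, max (max (-d + c₁) 0) (d - c₂) ≤ g d) := by
  intro η Fη lam₀ lam₁ lam₂ g
  have hF : 0 < Fη := Real.sqrt_pos.mpr (by positivity)
  have hF2 : Fη ^ 2 = (η - μ) ^ 2 + σ ^ 2 := Real.sq_sqrt (by positivity)
  have hg : g = dualQuadratic η Fη ((c₁ - c₂)/2) := by
    funext d
    simp only [g, lam₀, lam₁, lam₂, dualQuadratic, hF2, add_assoc]
  have hc₁ : η + (c₁ - c₂)/2 = c₁ := by ring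
  have hc₂ : η - (c₁ - c₂)/2 = c₂ := by ring
  have hη : (c₁ + c₂)/2 = η := rfl
  rw [hg]
  refine ⟨⟨?_, dualQuadratic.hasDerivAt_left_tangent _ hF.ne'⟩,
    ⟨?_, dualQuadratic.hasDerivAt_right_tangent _ hF.ne'⟩, fun hvar d => ?_⟩
  · rw [dualQuadratic.apply_left_tangent _ hF.ne', hc₁]
  · rw [dualQuadratic.apply_right_tangent _ hF.ne', hc₂]
  · have hgap : c₂ - c₁ ≤ Fη := by
      apply Real.le_sqrt_of_sq_le
      have hvar' := variance_condition_eq_sq_sub_sq μ c₁ c₂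
      rw [hη] at hvar'
      linarith
    have hmax := dualQuadratic.max_le (η := η) ((c₁ - c₂)/2) hF (by linarith) d
    rwa [hc₁, hc₂] at hmax

/-- The dual quadratic g is tangent to −d+c₁ at η−F(η) and to d−c₂ at η+F(η),
and dominates max{−d+c₁, 0, d−c₂} everywhere under the variance condition. -/
theorem dual_quadratic_tangency (μ σ c₁ c₂ : ℝ) (hσ : 0 < σ)
    (hc₁ : 0 < c₁) (hc : c₁ < c₂) :
    let η := (c₁ + c₂)/2
    let Fη := Real.sqrt ((η - μ) ^ 2 + σ ^ 2)
    let lam₀ := (η ^ 2 + (η - μ) ^ 2 + σ ^ 2) / (2 * Fη) + (c₁ - c₂)/2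
    let lam₁ := -η / Fη
    let lam₂ := 1 / (2 * Fη)
    let g := fun d : ℝ => lam₀ + lam₁ * d + lam₂ * d ^ 2
    (g (η - Fη) = -(η - Fη) + c₁ ∧ HasDerivAt g (-1) (η - Fη)) ∧
    (g (η + Fη) = (η + Fη) - c₂ ∧ HasDerivAt g 1 (η + Fη)) ∧
    ((1/4) * (2*μ - 3*c₁ + c₂) * (3*c₂ - c₁ - 2*μ) ≤ σ ^ 2 →
      ∀ d : ℝ, max (max (-d + c₁) 0) (d - c₂) ≤ g d) :=
  dual_quadratic_tangency_general μ σ c₁ c₂ hσ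
end

section
/- With μ = 8, σ = 3, for Q₁ any probability measure on [1−ε, 3+ε] (0 < ε < 1/4) with mean 2 and variance 1, define φ(d) = E_{Q₁}[|10 − D₁ − d|]. Then φ(d) ≤ (1/6)(d−8)² + 3/2 for all d ∈ ℝ, with equality at d = 5 and d = 11. -/
/-!
Write `c = 10 - d`, so that `φ(d) = E|c - D₁|` and `E[(c - D₁)²] = (d - 8)² + 1`. Outside the
window `27/4 < d < 37/4` the support condition fixes the sign of `c - D₁`, so `φ` is affine there
and touches the parabola at `d = 5` and `d = 11`. Inside the window the bound `|x| ≤ x²/3 + 3/4`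
(tangent at `|x| = 3/2`) gives `φ(d) ≤ ((d - 8)² + 1)/3 + 3/4`, which lies below the parabola as
long as `(d - 8)² ≤ 5/2`.
-/

open MeasureTheory Set

theorem abs_le_sq_div_add {k : ℝ} (hk : 0 < k) (x : ℝ) : |x| ≤ x ^ 2 / (4 * k) + k := by
  rw [div_add' _ _ _ (by positivity), le_div_iff₀ (by positivity), ← sq_abs]
  nlinarith [sq_nonneg (|x| - 2 * k)]

theorem integral_abs_le_integral_sq_div_add {Ω : Type*} [MeasurableSpace Ω] {μ : Measure Ω}
    [IsProbabilityMeasure μ] {f : Ω → ℝ} (hf : Integrable (fun ω => f ω ^ 2) μ)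
    {k : ℝ} (hk : 0 < k) :
    ∫ ω, |f ω| ∂μ ≤ (∫ ω, f ω ^ 2 ∂μ) / (4 * k) + k := by
  calc ∫ ω, |f ω| ∂μ ≤ ∫ ω, (f ω ^ 2 / (4 * k) + k) ∂μ :=
        integral_mono_of_nonneg (.of_forall fun _ => abs_nonneg _)
          ((hf.div_const _).add (integrable_const k))
          (.of_forall fun ω => abs_le_sq_div_add hk (f ω))
    _ = (∫ ω, f ω ^ 2 ∂μ) / (4 * k) + k := by
        rw [integral_add (hf.div_const _) (integrable_const k), integral_div, integral_const]
        simp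

section MomentsOnReals

variable {μ : Measure ℝ} [IsProbabilityMeasure μ] {c : ℝ}

theorem integral_abs_sub_of_ae_le (hμ : Integrable (fun t => t) μ) (h : ∀ᵐ t ∂μ, t ≤ c) :
    ∫ t, |c - t| ∂μ = c - ∫ t, t ∂μ := by
  rw [integral_congr_ae (h.mono fun t ht => abs_of_nonneg (sub_nonneg.2 ht)),
    integral_sub (integrable_const c) hμ, integral_const]
  simp

theorem integral_abs_sub_of_ae_ge (hμ : Integrable (fun t => t) μ) (h : ∀ᵐ t ∂μ, c ≤ t) :
    ∫ t, |c - t| ∂μ = (∫ t, t ∂μ) - c := by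
  rw [integral_congr_ae (h.mono fun t ht => by rw [abs_of_nonpos (sub_nonpos.2 ht), neg_sub]),
    integral_sub hμ (integrable_const c), integral_const]
  simp

theorem integrable_const_sub_sq (hμ : Integrable (fun t => t) μ)
    (hμ₂ : Integrable (fun t => t ^ 2) μ) (c : ℝ) : Integrable (fun t => (c - t) ^ 2) μ := by
  simp_rw [sub_sq]
  exact ((integrable_const _).sub (hμ.const_mul (2 * c))).add hμ₂

theorem integral_const_sub_sq (hμ : Integrable (fun t => t) μ)
    (hμ₂ : Integrable (fun t => t ^ 2) μ) (c : ℝ) :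
    ∫ t, (c - t) ^ 2 ∂μ = c ^ 2 - 2 * c * (∫ t, t ∂μ) + ∫ t, t ^ 2 ∂μ := by
  simp_rw [sub_sq]
  rw [integral_add (f := fun t => c ^ 2 - 2 * c * t)
      ((integrable_const _).sub (hμ.const_mul _)) hμ₂,
    integral_sub (integrable_const _) (hμ.const_mul _), integral_const, integral_const_mul]
  simp

end MomentsOnReals

theorem phi_quadratic_bound_general (ε : ℝ) (hε' : ε < 1/4)
    (Q₁ : Measure ℝ) [IsProbabilityMeasure Q₁]
    (hsupp : Q₁ (Set.Icc (1 - ε) (3 + ε))ᶜ = 0)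
    (hm1 : (∫ t, t ∂Q₁) = 2) (hm2 : (∫ t, t ^ 2 ∂Q₁) = 5) :
    (∀ d : ℝ, (∫ t, |10 - t - d| ∂Q₁) ≤ (1/6) * (d - 8) ^ 2 + 3/2) ∧
    (∫ t, |10 - t - 5| ∂Q₁) = (1/6) * ((5:ℝ) - 8) ^ 2 + 3/2 ∧
    (∫ t, |10 - t - 11| ∂Q₁) = (1/6) * ((11:ℝ) - 8) ^ 2 + 3/2 := by
  have hQ : ∀ᵐ t ∂Q₁, 3/4 ≤ t ∧ t ≤ 13/4 := by
    filter_upwards [mem_ae_iff.2 hsupp] with t ht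
    exact ⟨by linarith [ht.1], by linarith [ht.2]⟩
  have hint₁ : Integrable (fun t => t) Q₁ := .of_integral_ne_zero (by norm_num [hm1])
  have hint₂ : Integrable (fun t => t ^ 2) Q₁ := .of_integral_ne_zero (by norm_num [hm2])
  have hφ : ∀ d : ℝ, ∫ t, |10 - t - d| ∂Q₁ = ∫ t, |(10 - d) - t| ∂Q₁ := fun d => by
    simp only [sub_right_comm (10 : ℝ) _ d]
  have hφ_left : ∀ d ≤ 27/4, ∫ t, |10 - t - d| ∂Q₁ = 8 - d := fun d hd => by
    rw [hφ, integral_abs_sub_of_ae_le hint₁ (hQ.mono fun t ht => by linarith [ht.2]), hm1]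
    ring
  have hφ_right : ∀ d ≥ 37/4, ∫ t, |10 - t - d| ∂Q₁ = d - 8 := fun d hd => by
    rw [hφ, integral_abs_sub_of_ae_ge hint₁ (hQ.mono fun t ht => by linarith [ht.1]), hm1]
    ring
  refine ⟨fun d => ?_, by norm_num [hφ_left], by norm_num [hφ_right]⟩
  rcases le_or_gt d (27/4) with hd | hd
  · rw [hφ_left d hd]; nlinarith [sq_nonneg (d - 5)]
  rcases le_or_gt (37/4) d with hd' | hd'
  · rw [hφ_right d hd']; nlinarith [sq_nonneg (d - 11)]
  calc ∫ t, |10 - t - d| ∂Q₁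
      ≤ (∫ t, ((10 - d) - t) ^ 2 ∂Q₁) / (4 * (3/4)) + 3/4 := by
        rw [hφ]
        exact integral_abs_le_integral_sq_div_add (integrable_const_sub_sq hint₁ hint₂ _)
          (by norm_num)
    _ = ((d - 8) ^ 2 + 1) / 3 + 3/4 := by
        rw [integral_const_sub_sq hint₁ hint₂, hm1, hm2]; ring
    _ ≤ (1/6) * (d - 8) ^ 2 + 3/2 := by nlinarith

/-- For any probability measure Q₁ on [1−ε,3+ε] with mean 2 and second moment 5,
φ(d) = E[|10 − D₁ − d|] satisfies φ(d) ≤ (1/6)(d−8)² + 3/2 for all d, with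
equality at d = 5 and d = 11. -/
theorem phi_quadratic_bound (ε : ℝ) (hε : 0 < ε) (hε' : ε < 1/4)
    (Q₁ : Measure ℝ) [IsProbabilityMeasure Q₁]
    (hsupp : Q₁ (Set.Icc (1 - ε) (3 + ε))ᶜ = 0)
    (hm1 : (∫ t, t ∂Q₁) = 2) (hm2 : (∫ t, t ^ 2 ∂Q₁) = 5) :
    (∀ d : ℝ, (∫ t, |10 - t - d| ∂Q₁) ≤ (1/6) * (d - 8) ^ 2 + 3/2) ∧
    (∫ t, |10 - t - 5| ∂Q₁) = (1/6) * ((5:ℝ) - 8) ^ 2 + 3/2 ∧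
    (∫ t, |10 - t - 11| ∂Q₁) = (1/6) * ((11:ℝ) - 8) ^ 2 + 3/2 :=
  phi_quadratic_bound_general ε hε' Q₁ hsupp hm1 hm2
end

section
/- Let M₂ be the set of probability measures on ℝ₊ with mean 8 and variance 4 (second moment 68). Then inf_{(x,y): x≥9, y≥7} sup_{Q∈M₂} E_Q[(|x−D|+|y−D|)/2] = 2. -/
open MeasureTheory Set

noncomputable def Q0 : Measure ℝ :=
  (2⁻¹ : ENNReal) • (Measure.dirac 6 + Measure.dirac 10)

lemma integrable_dirac'_s16 (g : ℝ → ℝ) (a : ℝ) : Integrable g (Measure.dirac a) := by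
  have h : g =ᵐ[Measure.dirac a] fun _ => g a := by
    rw [MeasureTheory.ae_dirac_eq]; exact Filter.eventually_pure.2 rfl
  exact (integrable_const (g a)).congr h.symm

lemma integral_Q0 (g : ℝ → ℝ) : ∫ t, g t ∂Q0 = (g 6 + g 10) / 2 := by
  rw [Q0, integral_smul_measure,
    integral_add_measure (integrable_dirac'_s16 g 6) (integrable_dirac'_s16 g 10),
    integral_dirac, integral_dirac]
  simp [ENNReal.toReal_inv]
  ring

lemma integrable_Q0 (g : ℝ → ℝ) : Integrable g Q0 := by
  rw [Q0]
  exact (((integrable_dirac'_s16 g 6).add_measure (integrable_dirac'_s16 g 10)).smul_measure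
    (by norm_num))

lemma Q0_prob : IsProbabilityMeasure Q0 := by
  constructor
  rw [Q0]
  simp [Measure.dirac_apply]
  rw [ENNReal.inv_two_add_inv_two]

lemma Q0_mem : IsProbabilityMeasure Q0 ∧
    Q0 (Set.Ici (0:ℝ))ᶜ = 0 ∧ Integrable id Q0 ∧
    Integrable (fun t => t ^ 2) Q0 ∧
    (∫ t, t ∂Q0) = 8 ∧ (∫ t, t ^ 2 ∂Q0) = 68 := by
  refine ⟨Q0_prob, ?_, integrable_Q0 _, integrable_Q0 _, ?_, ?_⟩
  · rw [Q0]
    simp [Measure.dirac_apply', Set.indicator_apply]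
  · rw [integral_Q0 (fun t => t)]; norm_num
  · rw [integral_Q0 (fun t => t ^ 2)]; norm_num

/-- the worst-case upper bound at (9,7) -/
lemma key_upper (Q : Measure ℝ) (hP : IsProbabilityMeasure Q)
    (hi : Integrable id Q) (hi2 : Integrable (fun t => t ^ 2) Q)
    (hm : (∫ t, t ∂Q) = 8) (hm2 : (∫ t, t ^ 2 ∂Q) = 68) :
    (∫ t, (|9 - t| + |7 - t|) / 2 ∂Q) ≤ 2 := by
  have hi' : Integrable (fun t : ℝ => t) Q := hi
  have hf : Integrable (fun t => (|9 - t| + |7 - t|) / 2) Q := by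
    have h9 : Integrable (fun t : ℝ => |9 - t|) Q := ((integrable_const (9:ℝ)).sub hi').abs
    have h7 : Integrable (fun t : ℝ => |7 - t|) Q := ((integrable_const (7:ℝ)).sub hi').abs
    exact (h9.add h7).div_const 2
  have hB : Integrable (fun t : ℝ => 16 * t) Q := hi'.const_mul 16
  have hA : Integrable (fun t : ℝ => t ^ 2 - 16 * t) Q := hi2.sub hB
  have hq : Integrable (fun t : ℝ => (t ^ 2 - 16 * t + 68) / 4) Q :=
    (hA.add (integrable_const 68)).div_const 4
  have hle : ∀ t : ℝ, (|9 - t| + |7 - t|) / 2 ≤ (t ^ 2 - 16 * t + 68) / 4 := by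
    intro t
    rcases abs_cases (9 - t) with ⟨h1, _⟩ | ⟨h1, _⟩ <;>
      rcases abs_cases (7 - t) with ⟨h2, _⟩ | ⟨h2, _⟩ <;>
      nlinarith [sq_nonneg (t - 6), sq_nonneg (t - 8), sq_nonneg (t - 10)]
  calc (∫ t, (|9 - t| + |7 - t|) / 2 ∂Q) ≤ ∫ t, (t ^ 2 - 16 * t + 68) / 4 ∂Q :=
        integral_mono hf hq hle
    _ = 2 := by
        rw [integral_div, integral_add hA (integrable_const 68),
          integral_sub hi2 hB, integral_const_mul]
        simp only [integral_const, measure_univ, probReal_univ, ENNReal.toReal_one, smul_eq_mul, one_mul]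
        rw [hm2, hm]
        norm_num

lemma sSup_bdd (x y : ℝ) : BddAbove {s : ℝ | ∃ Q : Measure ℝ, IsProbabilityMeasure Q ∧
    Q (Set.Ici (0:ℝ))ᶜ = 0 ∧ Integrable id Q ∧
    Integrable (fun t => t ^ 2) Q ∧
    (∫ t, t ∂Q) = 8 ∧ (∫ t, t ^ 2 ∂Q) = 68 ∧
    s = ∫ t, (|x - t| + |y - t|) / 2 ∂Q} := by
  refine ⟨(|x| + |y|) / 2 + 8, ?_⟩
  rintro s ⟨Q, hP, h0, hi, hi2, hm, hm2, rfl⟩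
  have hi' : Integrable (fun t : ℝ => t) Q := hi
  have hiabs : Integrable (fun t : ℝ => |t|) Q := hi'.abs
  have hf : Integrable (fun t => (|x - t| + |y - t|) / 2) Q := by
    have hx' : Integrable (fun t : ℝ => |x - t|) Q := ((integrable_const x).sub hi').abs
    have hy' : Integrable (fun t : ℝ => |y - t|) Q := ((integrable_const y).sub hi').abs
    exact (hx'.add hy').div_const 2
  have hg : Integrable (fun t : ℝ => (|x| + |y|) / 2 + |t|) Q :=
    (integrable_const _).add hiabs
  have hle : ∀ t : ℝ, (|x - t| + |y - t|) / 2 ≤ (|x| + |y|) / 2 + |t| := by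
    intro t
    have h1 : |x - t| ≤ |x| + |t| := abs_sub x t
    have h2 : |y - t| ≤ |y| + |t| := abs_sub y t
    linarith
  have hae : ∀ᵐ t ∂Q, t ∈ Set.Ici (0:ℝ) := by
    rw [MeasureTheory.ae_iff]
    exact h0
  have habs : (∫ t, |t| ∂Q) = 8 := by
    rw [← hm]
    refine integral_congr_ae ?_
    filter_upwards [hae] with t ht
    exact abs_of_nonneg ht
  calc (∫ t, (|x - t| + |y - t|) / 2 ∂Q) ≤ ∫ t, (|x| + |y|) / 2 + |t| ∂Q :=
        integral_mono hf hg hle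
    _ = (|x| + |y|) / 2 + 8 := by
        rw [integral_add (integrable_const _) hiabs, habs]
        simp

/-- With M₂ the probability measures on ℝ₊ with mean 8 and second moment 68,
inf over (x,y) with x ≥ 9, y ≥ 7 of sup_{Q∈M₂} E_Q[(|x−D|+|y−D|)/2] equals 2. -/
theorem infsup_two_stage_eq_two :
    sInf {r : ℝ | ∃ x y : ℝ, 9 ≤ x ∧ 7 ≤ y ∧
      r = sSup {s : ℝ | ∃ Q : Measure ℝ, IsProbabilityMeasure Q ∧
        Q (Set.Ici (0:ℝ))ᶜ = 0 ∧ Integrable id Q ∧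
        Integrable (fun t => t ^ 2) Q ∧
        (∫ t, t ∂Q) = 8 ∧ (∫ t, t ^ 2 ∂Q) = 68 ∧
        s = ∫ t, (|x - t| + |y - t|) / 2 ∂Q}} = 2 := by
  obtain ⟨hprob, h0, hid, hsq, hm, hm2⟩ := Q0_mem
  have hlow : ∀ r ∈ {r : ℝ | ∃ x y : ℝ, 9 ≤ x ∧ 7 ≤ y ∧
      r = sSup {s : ℝ | ∃ Q : Measure ℝ, IsProbabilityMeasure Q ∧
        Q (Set.Ici (0:ℝ))ᶜ = 0 ∧ Integrable id Q ∧
        Integrable (fun t => t ^ 2) Q ∧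
        (∫ t, t ∂Q) = 8 ∧ (∫ t, t ^ 2 ∂Q) = 68 ∧
        s = ∫ t, (|x - t| + |y - t|) / 2 ∂Q}}, (2:ℝ) ≤ r := by
    rintro r ⟨x, y, hx, hy, rfl⟩
    have hmem : (∫ t, (|x - t| + |y - t|) / 2 ∂Q0) ∈
        {s : ℝ | ∃ Q : Measure ℝ, IsProbabilityMeasure Q ∧
        Q (Set.Ici (0:ℝ))ᶜ = 0 ∧ Integrable id Q ∧
        Integrable (fun t => t ^ 2) Q ∧
        (∫ t, t ∂Q) = 8 ∧ (∫ t, t ^ 2 ∂Q) = 68 ∧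
        s = ∫ t, (|x - t| + |y - t|) / 2 ∂Q} :=
      ⟨Q0, hprob, h0, hid, hsq, hm, hm2, rfl⟩
    have hval : (2:ℝ) ≤ ∫ t, (|x - t| + |y - t|) / 2 ∂Q0 := by
      rw [integral_Q0]
      have h1 : |x - 6| + |x - 10| ≥ 4 := by
        rcases abs_cases (x - 6) with ⟨e1, _⟩ | ⟨e1, _⟩ <;>
          rcases abs_cases (x - 10) with ⟨e2, _⟩ | ⟨e2, _⟩ <;> linarith
      have h2 : |y - 6| + |y - 10| ≥ 4 := by
        rcases abs_cases (y - 6) with ⟨e1, _⟩ | ⟨e1, _⟩ <;>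
          rcases abs_cases (y - 10) with ⟨e2, _⟩ | ⟨e2, _⟩ <;> linarith
      linarith
    exact le_trans hval (le_csSup (sSup_bdd x y) hmem)
  refine le_antisymm ?_ (le_csInf ⟨_, 9, 7, le_refl _, le_refl _, rfl⟩ hlow)
  · apply csInf_le ⟨2, hlow⟩
    refine ⟨9, 7, le_refl _, le_refl _, ?_⟩
    refine (le_antisymm ?_ ?_).symm
    · apply csSup_le
      · exact ⟨_, Q0, hprob, h0, hid, hsq, hm, hm2, rfl⟩
      · rintro s ⟨Q, hP, h0', hi, hi2, hm', hm2', rfl⟩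
        exact key_upper Q hP hi hi2 hm' hm2'
    · have hmem : (2:ℝ) ∈ {s : ℝ | ∃ Q : Measure ℝ, IsProbabilityMeasure Q ∧
          Q (Set.Ici (0:ℝ))ᶜ = 0 ∧ Integrable id Q ∧
          Integrable (fun t => t ^ 2) Q ∧
          (∫ t, t ∂Q) = 8 ∧ (∫ t, t ^ 2 ∂Q) = 68 ∧
          s = ∫ t, (|(9:ℝ) - t| + |7 - t|) / 2 ∂Q} := by
        refine ⟨Q0, hprob, h0, hid, hsq, hm, hm2, ?_⟩
        rw [integral_Q0]
        norm_num
      exact le_csSup (sSup_bdd 9 7) hmem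
end

section
/- Uniqueness of degenerate minimizer under large variance: suppose b > c, c+h > 0, μ > 0, σ > 0, σ²/μ² > (b−c)/(h+c). For probability measures Q₁ on ℝ and Q₂ on ℝ₊ with E_{Q₂}[D₂]=μ, E_{Q₂}[D₂²]=μ²+σ², define φ(Q₁) = sup_{Q₂} E_{Q₁×Q₂}[c·D₁ + b·(D₂−D₁)₊ + h·(D₁−D₂)₊] (D₁, D₂ independent). Then the Dirac measure δ₀ at 0 is the unique minimizer of φ over all probability measures Q₁ on ℝ, with value b·μ. -/
/-!
Test every `Q₁` against the two-point law `Q⋆ = Ber(a, 0, p)` with `p = μ²/(μ²+σ²)` and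
`a = (μ²+σ²)/μ`, which has the prescribed moments. The expected cost of an order `x` under `Q⋆`,
`G x = p Ψ(x, a) + (1 - p) Ψ(x, 0)`, is piecewise linear with `G 0 = b p a = b μ` and slopes
`c - b < 0` on `x < 0`, `c + h - p (b + h)` on `(0, a)` and `c + h > 0` on `(a, ∞)`; the variance
condition says exactly `p (b + h) < c + h`, so `G x > b μ` for `x ≠ 0`. Hence
`φ(Q₁) ≥ E_{Q₁}[G] > b μ` unless `Q₁ = δ₀`, while `E[Ψ(0, D₂)] = b E[D₂] = b μ` for every
admissible `D₂ ≥ 0`.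
-/

open MeasureTheory Set

/-- φ(Q₁) = sup_{Q₂ ∈ M} E_{Q₁×Q₂}[Ψ(D₁,D₂)]. -/
noncomputable def phiFun (c b h μ σ : ℝ) (Q₁ : MeasureTheory.Measure ℝ) : ℝ :=
  sSup {r : ℝ | ∃ Q₂ : MeasureTheory.Measure ℝ, inMomentFamily μ σ Q₂ ∧
    r = ∫ p : ℝ × ℝ,
      (c * p.1 + b * max (p.2 - p.1) 0 + h * max (p.1 - p.2) 0) ∂(Q₁.prod Q₂)}

open ProbabilityTheory

def newsvendorLoss (c b h x y : ℝ) : ℝ :=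
  c * x + b * max (y - x) 0 + h * max (x - y) 0

section newsvendorLoss

variable {c b h : ℝ}

lemma newsvendorLoss_zero_left {y : ℝ} (hy : 0 ≤ y) : newsvendorLoss c b h 0 y = b * y := by
  simp [newsvendorLoss, hy]

lemma newsvendorLoss_le (x y : ℝ) :
    newsvendorLoss c b h x y ≤ (|c| + |b| + |h|) * (|x| + |y|) := by
  have hyx : max (y - x) 0 ≤ |x| + |y| :=
    max_le (by linarith [neg_abs_le x, le_abs_self y]) (by positivity)
  have hxy : max (x - y) 0 ≤ |x| + |y| :=
    max_le (by linarith [le_abs_self x, neg_abs_le y]) (by positivity)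
  calc newsvendorLoss c b h x y
      ≤ |c| * |x| + |b| * max (y - x) 0 + |h| * max (x - y) 0 := by
        unfold newsvendorLoss
        gcongr ?_ + ?_ + ?_
        · rw [← abs_mul]; exact le_abs_self _
        · exact mul_le_mul_of_nonneg_right (le_abs_self b) (le_max_right _ _)
        · exact mul_le_mul_of_nonneg_right (le_abs_self h) (le_max_right _ _)
    _ ≤ |c| * (|x| + |y|) + |b| * (|x| + |y|) + |h| * (|x| + |y|) := by
        gcongr; exact le_add_of_nonneg_right (abs_nonneg y)
    _ = (|c| + |b| + |h|) * (|x| + |y|) := by ring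

lemma lt_mix_newsvendorLoss {p a x : ℝ} (hbc : c < b) (hch : 0 < c + h) (ha : 0 < a)
    (hp : p * (b + h) < c + h) (hx : x ≠ 0) :
    b * (p * a) < p * newsvendorLoss c b h x a + (1 - p) * newsvendorLoss c b h x 0 := by
  unfold newsvendorLoss
  rcases hx.lt_or_gt with hneg | hpos
  · rw [max_eq_left (by linarith), max_eq_right (by linarith),
      max_eq_left (by linarith), max_eq_right (by linarith)]
    nlinarith
  rcases le_or_gt x a with hxa | hxa
  · rw [max_eq_left (by linarith), max_eq_right (by linarith),
      max_eq_right (by linarith), max_eq_left (by linarith)]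
    nlinarith
  · rw [max_eq_right (by linarith), max_eq_left (by linarith),
      max_eq_right (by linarith), max_eq_left (by linarith)]
    nlinarith

lemma integrable_newsvendorLoss_left {Q : Measure ℝ} [IsFiniteMeasure Q] (hQ : Integrable id Q)
    (y : ℝ) : Integrable (fun x => newsvendorLoss c b h x y) Q :=
  ((hQ.const_mul c).add (((integrable_const y).sub hQ).pos_part.const_mul b)).add
    ((hQ.sub (integrable_const y)).pos_part.const_mul h)

variable {Q₁ Q₂ : Measure ℝ} [IsProbabilityMeasure Q₁] [IsProbabilityMeasure Q₂]

lemma integrable_newsvendorLoss (h₁ : Integrable id Q₁) (h₂ : Integrable id Q₂) :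
    Integrable (fun z : ℝ × ℝ => newsvendorLoss c b h z.1 z.2) (Q₁.prod Q₂) := by
  have hx : Integrable (fun z : ℝ × ℝ => z.1) (Q₁.prod Q₂) := h₁.comp_fst Q₂
  have hy : Integrable (fun z : ℝ × ℝ => z.2) (Q₁.prod Q₂) := h₂.comp_snd Q₁
  exact ((hx.const_mul c).add ((hy.sub hx).pos_part.const_mul b)).add
    ((hx.sub hy).pos_part.const_mul h)

lemma integral_newsvendorLoss_le (h₁ : Integrable id Q₁) (h₂ : Integrable id Q₂) :
    ∫ z, newsvendorLoss c b h z.1 z.2 ∂(Q₁.prod Q₂)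
      ≤ (|c| + |b| + |h|) * (∫ x, |x| ∂Q₁ + ∫ y, |y| ∂Q₂) := by
  have hx : Integrable (fun z : ℝ × ℝ => |z.1|) (Q₁.prod Q₂) := h₁.abs.comp_fst Q₂
  have hy : Integrable (fun z : ℝ × ℝ => |z.2|) (Q₁.prod Q₂) := h₂.abs.comp_snd Q₁
  calc ∫ z, newsvendorLoss c b h z.1 z.2 ∂(Q₁.prod Q₂)
      ≤ ∫ z, (|c| + |b| + |h|) * (|z.1| + |z.2|) ∂(Q₁.prod Q₂) :=
        integral_mono (integrable_newsvendorLoss h₁ h₂) ((hx.add hy).const_mul _)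
          fun z => newsvendorLoss_le z.1 z.2
    _ = (|c| + |b| + |h|) * (∫ x, |x| ∂Q₁ + ∫ y, |y| ∂Q₂) := by
        rw [integral_const_mul, integral_add hx hy, integral_fun_fst (fun x => |x|),
          integral_fun_snd (fun y => |y|)]
        simp

end newsvendorLoss

lemma lt_integral_of_ne_dirac {α : Type*} [MeasurableSpace α] [MeasurableSingletonClass α]
    {Q : Measure α} [IsProbabilityMeasure Q] {f : α → ℝ} {x₀ : α} {m : ℝ} (hf : Integrable f Q)
    (hx₀ : m ≤ f x₀) (hlt : ∀ x, x ≠ x₀ → m < f x) (hQ : Q ≠ Measure.dirac x₀) :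
    m < ∫ x, f x ∂Q := by
  have hcompl : Q {x₀}ᶜ ≠ 0 := by
    intro h0
    apply hQ
    rw [← Measure.restrict_eq_self_of_ae_mem (ae_iff.mpr h0), Measure.restrict_singleton,
      (prob_compl_eq_zero_iff (measurableSet_singleton x₀)).mp h0, one_smul]
  have hle : ∀ x, m ≤ f x := fun x => by
    rcases eq_or_ne x x₀ with rfl | hx
    exacts [hx₀, (hlt x hx).le]
  have hsupport : {x₀}ᶜ ⊆ Function.support (fun x => f x - m) :=
    fun x hx => (sub_pos.mpr (hlt x hx)).ne'
  have hpos : 0 < ∫ x, (f x - m) ∂Q :=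
    (integral_pos_iff_support_of_nonneg_ae (ae_of_all _ fun x => sub_nonneg.mpr (hle x))
      (hf.sub (integrable_const m))).mpr
      (pos_iff_ne_zero.mpr fun h0 => hcompl (measure_mono_null hsupport h0))
  rw [integral_sub hf (integrable_const m), integral_const, probReal_univ, one_smul] at hpos
  linarith

section MomentFamily

variable {μ σ : ℝ} {Q : Measure ℝ}

lemma ae_nonneg_of_inMomentFamily (hQ : inMomentFamily μ σ Q) : ∀ᵐ y ∂Q, 0 ≤ y :=
  measure_mono_null (fun y hy => by simpa using hy) hQ.2.1

lemma integral_abs_of_inMomentFamily (hQ : inMomentFamily μ σ Q) : ∫ y, |y| ∂Q = μ := by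
  rw [← hQ.2.2.2.2.1]
  exact integral_congr_ae ((ae_nonneg_of_inMomentFamily hQ).mono fun y hy => abs_of_nonneg hy)

lemma integral_newsvendorLoss_dirac_zero_prod (c b h : ℝ) (hQ : inMomentFamily μ σ Q) :
    ∫ z, newsvendorLoss c b h z.1 z.2 ∂((Measure.dirac 0).prod Q) = b * μ := by
  have : IsProbabilityMeasure Q := hQ.1
  rw [Measure.dirac_prod, (measurableEmbedding_prodMk_left 0).integral_map, ← hQ.2.2.2.2.1,
    ← integral_const_mul]
  exact integral_congr_ae ((ae_nonneg_of_inMomentFamily hQ).mono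
    fun y hy => newsvendorLoss_zero_left hy)

end MomentFamily

lemma phiFun_dirac_zero (c b h : ℝ) {μ σ : ℝ} (hM : ∃ Q, inMomentFamily μ σ Q) :
    phiFun c b h μ σ (Measure.dirac 0) = b * μ := by
  obtain ⟨Q, hQ⟩ := hM
  have hvalues : {r : ℝ | ∃ Q₂ : Measure ℝ, inMomentFamily μ σ Q₂ ∧
      r = ∫ z, newsvendorLoss c b h z.1 z.2 ∂((Measure.dirac 0).prod Q₂)} = {b * μ} := by
    ext r
    constructor
    · rintro ⟨Q₂, hQ₂, rfl⟩
      exact integral_newsvendorLoss_dirac_zero_prod c b h hQ₂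
    · rintro rfl
      exact ⟨Q, hQ, (integral_newsvendorLoss_dirac_zero_prod c b h hQ).symm⟩
  exact (congrArg sSup hvalues).trans (csSup_singleton _)

lemma integral_newsvendorLoss_le_phiFun (c b h : ℝ) {μ σ : ℝ} {Q₁ Q₂ : Measure ℝ}
    [IsProbabilityMeasure Q₁] (h₁ : Integrable id Q₁) (hQ₂ : inMomentFamily μ σ Q₂) :
    ∫ z, newsvendorLoss c b h z.1 z.2 ∂(Q₁.prod Q₂) ≤ phiFun c b h μ σ Q₁ := by
  refine le_csSup ⟨(|c| + |b| + |h|) * (∫ x, |x| ∂Q₁ + μ), ?_⟩ ⟨Q₂, hQ₂, rfl⟩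
  rintro r ⟨Q, hQ, rfl⟩
  have : IsProbabilityMeasure Q := hQ.1
  rw [← integral_abs_of_inMomentFamily hQ]
  exact integral_newsvendorLoss_le h₁ hQ.2.2.1

lemma integral_prod_bernoulliMeasure {α : Type*} [MeasurableSpace α] {Q : Measure α} [SFinite Q]
    (x y : ℝ) (p : unitInterval) {f : α × ℝ → ℝ} (hf : Integrable f (Q.prod Ber(x, y, p))) :
    ∫ z, f z ∂(Q.prod Ber(x, y, p)) = ∫ t, ((p : ℝ) * f (t, x) + (1 - p) * f (t, y)) ∂Q := by
  rw [integral_prod f hf]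
  simp only [integral_bernoulliMeasure, smul_eq_mul]

noncomputable def extremalWeight (μ σ : ℝ) : unitInterval :=
  ⟨μ ^ 2 / (μ ^ 2 + σ ^ 2), by positivity, div_le_one_of_le₀ (by nlinarith) (by positivity)⟩

noncomputable def extremalLaw (μ σ : ℝ) : Measure ℝ :=
  Ber((μ ^ 2 + σ ^ 2) / μ, 0, extremalWeight μ σ)

lemma extremalWeight_mul {μ : ℝ} (σ : ℝ) (hμ : μ ≠ 0) :
    (extremalWeight μ σ : ℝ) * ((μ ^ 2 + σ ^ 2) / μ) = μ := by
  have : μ ^ 2 + σ ^ 2 ≠ 0 := by positivity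
  simp only [extremalWeight]; field_simp

lemma extremalWeight_mul_lt {b c h μ σ : ℝ} (hch : 0 < c + h) (hμ : 0 < μ)
    (hvar : σ ^ 2 / μ ^ 2 > (b - c) / (h + c)) : (extremalWeight μ σ : ℝ) * (b + h) < c + h := by
  have hvar' : (b - c) * μ ^ 2 < σ ^ 2 * (h + c) :=
    (div_lt_div_iff₀ (by linarith) (by positivity)).mp hvar
  simp only [extremalWeight]
  rw [div_mul_eq_mul_div, div_lt_iff₀ (by positivity)]
  linarith

lemma inMomentFamily_extremalLaw {μ : ℝ} (σ : ℝ) (hμ : 0 < μ) :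
    inMomentFamily μ σ (extremalLaw μ σ) := by
  refine ⟨by unfold extremalLaw; infer_instance, ?_, integrable_bernoulliMeasure _ _ _ _,
    integrable_bernoulliMeasure _ _ _ _, ?_, ?_⟩
  · exact bernoulliMeasure_apply_of_notMem_of_notMem _ measurableSet_Ici.compl
      (by simp; positivity) (by simp)
  · simp only [extremalLaw, integral_bernoulliMeasure, smul_eq_mul]
    linear_combination extremalWeight_mul σ hμ.ne'
  · simp only [extremalLaw, integral_bernoulliMeasure, smul_eq_mul]
    simp only [extremalWeight]; field_simp; ring

theorem dirac_zero_unique_minimizer_general (b c h μ σ : ℝ) (hbc : c < b) (hch : 0 < c + h)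
    (hμ : 0 < μ) (hvar : σ ^ 2 / μ ^ 2 > (b - c) / (h + c)) :
    phiFun c b h μ σ (MeasureTheory.Measure.dirac 0) = b * μ ∧
    ∀ Q₁ : MeasureTheory.Measure ℝ, MeasureTheory.IsProbabilityMeasure Q₁ →
      MeasureTheory.Integrable id Q₁ → Q₁ ≠ MeasureTheory.Measure.dirac 0 →
      b * μ < phiFun c b h μ σ Q₁ := by
  have hext := inMomentFamily_extremalLaw σ hμ
  refine ⟨phiFun_dirac_zero c b h ⟨_, hext⟩, fun Q₁ _ h₁ hne => ?_⟩
  set p : ℝ := (extremalWeight μ σ : ℝ)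
  set a : ℝ := (μ ^ 2 + σ ^ 2) / μ
  have hpa : p * a = μ := extremalWeight_mul σ hμ.ne'
  have hp : p * (b + h) < c + h := extremalWeight_mul_lt hch hμ hvar
  have ha : 0 < a := by positivity
  calc b * μ
      < ∫ x, (p * newsvendorLoss c b h x a + (1 - p) * newsvendorLoss c b h x 0) ∂Q₁ := by
        refine lt_integral_of_ne_dirac (x₀ := 0) ?_ ?_
          (fun x hx => hpa ▸ lt_mix_newsvendorLoss hbc hch ha hp hx) hne
        · exact ((integrable_newsvendorLoss_left h₁ a).const_mul p).add
            ((integrable_newsvendorLoss_left h₁ 0).const_mul (1 - p))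
        · rw [newsvendorLoss_zero_left ha.le, newsvendorLoss_zero_left le_rfl, ← hpa]
          exact le_of_eq (by ring)
    _ = ∫ z, newsvendorLoss c b h z.1 z.2 ∂(Q₁.prod (extremalLaw μ σ)) :=
        (integral_prod_bernoulliMeasure _ _ _ (integrable_newsvendorLoss h₁ hext.2.2.1)).symm
    _ ≤ phiFun c b h μ σ Q₁ := integral_newsvendorLoss_le_phiFun c b h h₁ hext

/-- Under the large-variance condition σ²/μ² > (b−c)/(h+c), the Dirac measure at 0
is the unique minimizer of φ over probability measures Q₁ on ℝ (with finite first
moment), with value bμ. -/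
theorem dirac_zero_unique_minimizer (b c h μ σ : ℝ) (hbc : c < b) (hch : 0 < c + h)
    (hμ : 0 < μ) (hσ : 0 < σ) (hvar : σ ^ 2 / μ ^ 2 > (b - c) / (h + c)) :
    phiFun c b h μ σ (MeasureTheory.Measure.dirac 0) = b * μ ∧
    ∀ Q₁ : MeasureTheory.Measure ℝ, MeasureTheory.IsProbabilityMeasure Q₁ →
      MeasureTheory.Integrable id Q₁ → Q₁ ≠ MeasureTheory.Measure.dirac 0 →
      b * μ < phiFun c b h μ σ Q₁ :=
  dirac_zero_unique_minimizer_general b c h μ σ hbc hch hμ hvar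
end
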